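/- For the q-state Potts model with q ≥ 2, d ≥ 3, m = e^B ≥ 1 and θ = 1/(e^β − 1) > 0: if v ≥ 1, or if v < 1 and m·F(v) > F(1), then every BP fixed point h ∈ Δ* takes at most two distinct coordinate values; more precisely there is a spin σ0 (with σ0 = 1 whenever m > 1) such that h_σ is the same for all σ ≠ σ0, with common value at most v. -/

import Mathlib

open Finset Filter MeasureTheory

noncomputable section

/-! ## Simplex, specifications, Bethe functional -/

/-- The simplex of probability vectors on `Fin q`. -/
def simplex (q : ℕ) : Set (Fin q → ℝ) :=
  {h | (∀ σ, 0 ≤ h σ) ∧ ∑ σ, h σ = 1}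

/-- `(ψ, ψ̄)` is a valid specification: `ψ` symmetric nonnegative, `ψ̄` positive. -/
def IsSpec {q : ℕ} (ψ : Fin q → Fin q → ℝ) (ψb : Fin q → ℝ) : Prop :=
  (∀ σ σ', ψ σ σ' = ψ σ' σ) ∧ (∀ σ σ', 0 ≤ ψ σ σ') ∧ ∀ σ, 0 < ψb σ

/-- Permissivity of the interaction `ψ`. -/
def Permissive {q : ℕ} (ψ : Fin q → Fin q → ℝ) : Prop :=
  ∃ σp, ∀ σ, 0 < ψ σ σp

/-- The belief propagation (Bethe) recursion. -/
def BPmap (q d : ℕ) (ψ : Fin q → Fin q → ℝ) (ψb : Fin q → ℝ) (h : Fin q → ℝ) :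
    Fin q → ℝ := fun σ =>
  ψb σ * (∑ σ', ψ σ σ' * h σ') ^ (d - 1) /
    ∑ τ, ψb τ * (∑ σ', ψ τ σ' * h σ') ^ (d - 1)

/-- The set `Δ*` of fixed points of the BP recursion in the simplex. -/
def bpFixedPts (q d : ℕ) (ψ : Fin q → Fin q → ℝ) (ψb : Fin q → ℝ) : Set (Fin q → ℝ) :=
  {h | h ∈ simplex q ∧ BPmap q d ψ ψb h = h}

/-- The Bethe free energy functional `Φ(h)`. -/
def PhiFun (q d : ℕ) (ψ : Fin q → Fin q → ℝ) (ψb : Fin q → ℝ) (h : Fin q → ℝ) : ℝ :=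
  Real.log (∑ σ, ψb σ * (∑ σ', ψ σ σ' * h σ') ^ d) -
    ((d : ℝ) / 2) * Real.log (∑ σ, ∑ σ', ψ σ σ' * h σ * h σ')

/-- The Bethe prediction `Φ = sup_{h ∈ Δ*} Φ(h)`. -/
def BetheP (q d : ℕ) (ψ : Fin q → Fin q → ℝ) (ψb : Fin q → ℝ) : ℝ :=
  sSup (PhiFun q d ψ ψb '' bpFixedPts q d ψ ψb)

/-! ## Edge simplex and edge Bethe functional -/

/-- Symmetric probability measures on `Fin q × Fin q`. -/
def edgeSimplex (q : ℕ) : Set (Fin q → Fin q → ℝ) :=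
  {h | (∀ σ σ', 0 ≤ h σ σ') ∧ (∀ σ σ', h σ σ' = h σ' σ) ∧ ∑ σ, ∑ σ', h σ σ' = 1}

/-- One-point marginal of an edge measure. -/
def marg (q : ℕ) (h : Fin q → Fin q → ℝ) : Fin q → ℝ := fun σ => ∑ σ', h σ σ'

/-- Shannon entropy of a measure on `Fin q`. -/
def ent1 (q : ℕ) (p : Fin q → ℝ) : ℝ := -∑ σ, p σ * Real.log (p σ)

/-- Shannon entropy of a measure on `Fin q × Fin q`. -/
def ent2 (q : ℕ) (h : Fin q → Fin q → ℝ) : ℝ := -∑ σ, ∑ σ', h σ σ' * Real.log (h σ σ')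

/-- The edge Bethe free energy functional `𝚽`. -/
def edgePhi (q d : ℕ) (ψ : Fin q → Fin q → ℝ) (ψb : Fin q → ℝ)
    (h : Fin q → Fin q → ℝ) : ℝ :=
  (∑ σ, marg q h σ * Real.log (ψb σ)) - ((d : ℝ) - 1) * ent1 q (marg q h) +
    ((d : ℝ) / 2) * ((∑ σ, ∑ σ', h σ σ' * Real.log (ψ σ σ')) + ent2 q h)

/-- The embedding `g ↦ g ⊗_ψ g` of the simplex into the edge simplex. -/
def tensorPsi (q : ℕ) (ψ : Fin q → Fin q → ℝ) (g : Fin q → ℝ) : Fin q → Fin q → ℝ :=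
  fun σ σ' => ψ σ σ' * g σ * g σ' / ∑ τ, ∑ τ', ψ τ τ' * g τ * g τ'

/-- All directional derivatives of `𝚽` within the edge simplex vanish at `h`. -/
def IsStationaryOn (q d : ℕ) (ψ : Fin q → Fin q → ℝ) (ψb : Fin q → ℝ)
    (h : Fin q → Fin q → ℝ) : Prop :=
  ∀ h' ∈ edgeSimplex q,
    deriv (fun η : ℝ =>
      edgePhi q d ψ ψb fun σ σ' => h σ σ' + η * (h' σ σ' - h σ σ')) 0 = 0

/-! ## Matchings (configuration model) -/

/-- A perfect matching of `Fin N`, encoded as a fixed-point-free involution. -/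
def IsMatching {N : ℕ} (m : Fin N → Fin N) : Prop :=
  Function.Involutive m ∧ ∀ i, m i ≠ i

instance {N : ℕ} : DecidablePred (IsMatching (N := N)) := fun m =>
  decidable_of_iff ((∀ i, m (m i) = i) ∧ ∀ i, m i ≠ i) Iff.rfl

/-- The set `M_{d,n}` of perfect matchings (here of `Fin N`). -/
abbrev Matchings (N : ℕ) := {m : Fin N → Fin N // IsMatching m}

/-- Representative modulo `n` of a half-edge label. -/
def bar (d n : ℕ) (i : Fin (d * n)) : Fin n :=
  ⟨i.1 % n, Nat.mod_lt _ (Nat.pos_of_ne_zero fun h => by subst h; simpa using i.2)⟩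

/-- Partition function of the factor model determined by a matching `γ ∈ M_{d,n}`. -/
def Zmatch (q d n : ℕ) (ψ : Fin q → Fin q → ℝ) (ψb : Fin q → ℝ)
    (γ : Matchings (d * n)) : ℝ :=
  ∑ σ : Fin n → Fin q,
    (∏ v, ψb (σ v)) *
      ∏ i ∈ univ.filter fun i => i < γ.1 i, ψ (σ (bar d n i)) (σ (bar d n (γ.1 i)))

/-- Expectation under the uniform measure on matchings (configuration model). -/
def Ecm (d n : ℕ) (f : Matchings (d * n) → ℝ) : ℝ :=
  (∑ γ : Matchings (d * n), f γ) / (Fintype.card (Matchings (d * n)) : ℝ)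

/-- The free energy `φ^cm_{d,n}` of the configuration model. -/
def phiCm (q d n : ℕ) (ψ : Fin q → Fin q → ℝ) (ψb : Fin q → ℝ) : ℝ :=
  (n : ℝ)⁻¹ * Ecm d n fun γ => Real.log (Zmatch q d n ψ ψb γ)

/-- Probability of an event under the uniform measure on matchings. -/
def Pcm (d n : ℕ) (p : Matchings (d * n) → Prop) : ℝ :=
  (Nat.card {γ : Matchings (d * n) // p γ} : ℝ) / (Fintype.card (Matchings (d * n)) : ℝ)

/-! ## Multigraphs via adjacency counts, tree-like vertices, `ζ_t` -/

/-- Degree in a multigraph given by adjacency counts (a self-loop counts twice,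
via the convention `A v v = 2 · #loops`). -/
def mgDeg {V : Type} [Fintype V] (A : V → V → ℕ) (u : V) : ℕ := ∑ w, A u w

/-- The simple graph underlying a multigraph (loops and multiplicities dropped). -/
def mgGraph {V : Type} (A : V → V → ℕ) : SimpleGraph V where
  Adj u w := u ≠ w ∧ (A u w ≠ 0 ∨ A w u ≠ 0)
  symm := ⟨fun u w h => ⟨h.1.symm, h.2.symm⟩⟩
  loopless := ⟨fun u h => h.1 rfl⟩

/-- The radius-`t` ball around `v`. -/
def mball {V : Type} [Fintype V] (A : V → V → ℕ) (v : V) (t : ℕ) : Finset V := by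
  classical exact univ.filter fun u => (mgGraph A).Reachable v u ∧ (mgGraph A).dist v u ≤ t

/-- `v` is `t`-tree-like: the radius-`t` ball around `v` is isomorphic to the depth-`t`
ball of the `d`-regular tree; concretely, every vertex at distance `< t` has degree `d`,
the ball carries no self-loops or multi-edges, and the (connected) ball has exactly
`|ball| - 1` edges, i.e. contains no cycle. -/
def treeLike (d : ℕ) {V : Type} [Fintype V] (A : V → V → ℕ) (t : ℕ) (v : V) : Prop :=
  (∀ u, (mgGraph A).Reachable v u → (mgGraph A).dist v u < t → mgDeg A u = d) ∧
  (∀ u ∈ mball A v t, A u u = 0) ∧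
  (∀ u ∈ mball A v t, ∀ w ∈ mball A v t, A u w ≤ 1) ∧
  (∑ u ∈ mball A v t, ∑ w ∈ mball A v t, A u w) = 2 * ((mball A v t).card - 1)

/-- Fraction `ζ_t` of vertices whose radius-`t` ball is not `d`-regular-tree-like. -/
def zeta (d : ℕ) {V : Type} [Fintype V] (A : V → V → ℕ) (t : ℕ) : ℝ :=
  (Nat.card {v : V // ¬ treeLike d A t v} : ℝ) / (Fintype.card V : ℝ)

/-- Adjacency counts of the multigraph `G[γ]` determined by a matching. -/
def matchAdj {d n : ℕ} (γ : Matchings (d * n)) (u w : Fin n) : ℕ :=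
  (univ.filter fun i : Fin (d * n) => bar d n i = u ∧ bar d n (γ.1 i) = w).card

/-- Adjacency counts of a simple graph. -/
def sgAdj {V : Type} [Fintype V] (G : SimpleGraph V) (u w : V) : ℕ := by
  classical exact if G.Adj u w then 1 else 0

/-! ## Partition functions of graphs and multigraphs -/

/-- The Gibbs weight of a configuration on a simple graph. -/
def graphWeight (q : ℕ) {V : Type} [Fintype V] [LinearOrder V] (ψ : Fin q → Fin q → ℝ)
    (ψb : Fin q → ℝ) (G : SimpleGraph V) (σ : V → Fin q) : ℝ := by
  classical exact
    (∏ v, ψb (σ v)) *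
      ∏ p ∈ univ.filter fun p : V × V => p.1 < p.2 ∧ G.Adj p.1 p.2, ψ (σ p.1) (σ p.2)

/-- Partition function of the factor model on a simple graph. -/
def ZG (q : ℕ) {V : Type} [Fintype V] [LinearOrder V] (ψ : Fin q → Fin q → ℝ)
    (ψb : Fin q → ℝ) (G : SimpleGraph V) : ℝ :=
  ∑ σ : V → Fin q, graphWeight q ψ ψb G σ

/-- The Gibbs weight of a configuration on a multigraph. -/
def mgWeight (q : ℕ) {V : Type} [Fintype V] [LinearOrder V] (ψ : Fin q → Fin q → ℝ)
    (ψb : Fin q → ℝ) (A : V → V → ℕ) (σ : V → Fin q) : ℝ :=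
  (∏ v, ψb (σ v)) *
    (∏ p ∈ univ.filter fun p : V × V => p.1 < p.2, ψ (σ p.1) (σ p.2) ^ A p.1 p.2) *
    ∏ v, ψ (σ v) (σ v) ^ (A v v / 2)

/-- Partition function of the factor model on a multigraph. -/
def Zmg (q : ℕ) {V : Type} [Fintype V] [LinearOrder V] (ψ : Fin q → Fin q → ℝ)
    (ψb : Fin q → ℝ) (A : V → V → ℕ) : ℝ :=
  ∑ σ : V → Fin q, mgWeight q ψ ψb A σ

/-- Remove a vertex from a multigraph (delete all incident edges). -/
def removeVx {V : Type} [DecidableEq V] (A : V → V → ℕ) (v : V) : V → V → ℕ :=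
  fun i j => if i = v ∨ j = v then 0 else A i j

/-- Law of the spins of the (enumerated) neighbors of `v` under the factor model
on the multigraph with `v` removed. -/
def nuMinus (q d N : ℕ) (ψ : Fin q → Fin q → ℝ) (ψb : Fin q → ℝ)
    (A : Fin N → Fin N → ℕ) (v : Fin N) (vs : Fin d → Fin N) (τ : Fin d → Fin q) : ℝ :=
  (∑ᶠ (σ : Fin N → Fin q) (_ : ∀ j, σ (vs j) = τ j), mgWeight q ψ ψb (removeVx A v) σ) /
    Zmg q ψ ψb (removeVx A v)

/-- Total variation distance of probability vectors. -/
def dTV {α : Type} [Fintype α] (p r : α → ℝ) : ℝ := (∑ x, |p x - r x|) / 2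

/-- The mixture `ρ̄` of product measures associated to a measure `ρ` on `Δ^d`. -/
def rhoBar (q d : ℕ) (ρ : Measure (Fin d → Fin q → ℝ)) (τ : Fin d → Fin q) : ℝ :=
  ∫ h, (∏ j, h j (τ j)) ∂ρ

/-- `x` lies in the (topological) support of the measure `ρ`. -/
def inSupp {α : Type*} [TopologicalSpace α] {m : MeasurableSpace α}
    (ρ : Measure α) (x : α) : Prop :=
  ∀ U : Set α, IsOpen U → x ∈ U → 0 < ρ U

/-- Symmetric multigraph adjacency data with an even number of half-loops. -/
def IsMultigraphAdj {V : Type} (A : V → V → ℕ) : Prop :=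
  (∀ u w, A u w = A w u) ∧ ∀ v, Even (A v v)

/-- `d`-regularity of a multigraph. -/
def IsRegAdj (d : ℕ) {V : Type} [Fintype V] (A : V → V → ℕ) : Prop :=
  ∀ v, mgDeg A v = d

/-! ## The functionals `Ψ^vx`, `Ψ^e`, `Ψ^{e,sym}`, `Ψ^sym` -/

def PsiVx (q d : ℕ) (ψ : Fin q → Fin q → ℝ) (ψb : Fin q → ℝ)
    (h : Fin d → Fin q → ℝ) : ℝ :=
  ∑ σ, ψb σ * ∏ j, ∑ σ', ψ σ σ' * h j σ'

def PsiE (q d : ℕ) (ψ : Fin q → Fin q → ℝ) (h : Fin d → Fin q → ℝ) : ℝ :=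
  ∏ j : Fin (d / 2),
    ∑ σ, ∑ σ', ψ σ σ' * h ⟨2 * j.1, by have := j.2; omega⟩ σ *
      h ⟨2 * j.1 + 1, by have := j.2; omega⟩ σ'

def PsiEsym (q d : ℕ) (ψ : Fin q → Fin q → ℝ) (h : Fin d → Fin q → ℝ) : ℝ :=
  (∑ π : Equiv.Perm (Fin d), PsiE q d ψ fun j => h (π j)) / (Nat.factorial d : ℝ)

def PsiSym (q d : ℕ) (ψ : Fin q → Fin q → ℝ) (ψb : Fin q → ℝ)
    (h : Fin d → Fin q → ℝ) : ℝ :=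
  PsiVx q d ψ ψb h / PsiEsym q d ψ h

/-! ## Potts model -/

/-- Potts pair interaction. -/
def pottsPsi (q : ℕ) (β : ℝ) : Fin q → Fin q → ℝ :=
  fun σ σ' => Real.exp (if σ = σ' then β else 0)

/-- Potts magnetic field (favoring the spin with index `0`). -/
def pottsPsib (q : ℕ) (B : ℝ) : Fin q → ℝ :=
  fun σ => Real.exp (if σ.1 = 0 then B else 0)

/-- The one-parameter family `h_b ∈ Δ̄` of biased measures. -/
def pottsHb (q : ℕ) (b : ℝ) : Fin q → ℝ :=
  fun σ => if σ.1 = 0 then (1 + ((q : ℝ) - 1) * b) / q else (1 - b) / q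

/-- The univariate Bethe recursion `bp` on the bias parameter `b`. -/
def pottsBp (q d : ℕ) (β B : ℝ) (b : ℝ) : ℝ :=
  ((q : ℝ) * (∑ σ ∈ univ.filter fun σ : Fin q => σ.1 = 0,
      BPmap q d (pottsPsi q β) (pottsPsib q B) (pottsHb q b) σ) - 1) / ((q : ℝ) - 1)

/-- `b_f`, the limit of the (monotone) BP iterates started from `b = 0`. -/
def bLo (q d : ℕ) (β B : ℝ) : ℝ := ⨆ t : ℕ, (pottsBp q d β B)^[t] 0

/-- `b_m`, the limit of the (monotone) BP iterates started from `b = 1`. -/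
def bHi (q d : ℕ) (β B : ℝ) : ℝ := ⨅ t : ℕ, (pottsBp q d β B)^[t] 1

/-- The function `F(x) = x⁻¹ (x/θ + 1)^{d-1}`. -/
def Fpotts (d : ℕ) (θ x : ℝ) : ℝ := x⁻¹ * (x / θ + 1) ^ (d - 1)

/-! ## Exchangeable pairs and the symmetric correlation coefficient -/

def eMean (q : ℕ) (h φ : Fin q → Fin q → ℝ) : ℝ := ∑ σ, ∑ σ', h σ σ' * φ σ σ'

def eVar (q : ℕ) (h φ : Fin q → Fin q → ℝ) : ℝ :=
  ∑ σ, ∑ σ', h σ σ' * (φ σ σ' - eMean q h φ) ^ 2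

def eCondVar (q : ℕ) (h φ : Fin q → Fin q → ℝ) : ℝ :=
  ∑ σ, marg q h σ * ((∑ σ', h σ σ' * φ σ σ') / marg q h σ - eMean q h φ) ^ 2

/-- The symmetric correlation coefficient `ρ_XY` of an exchangeable pair with law `h`. -/
def rhoXY (q : ℕ) (h : Fin q → Fin q → ℝ) : ℝ :=
  sSup {r | ∃ φ : Fin q → Fin q → ℝ, (∀ σ σ', φ σ σ' = φ σ' σ) ∧ 0 < eVar q h φ ∧
    r = eCondVar q h φ / eVar q h φ}

/-! ## Empirical measures, misc -/

/-- The edge empirical measure `L^e(σ, γ)`. -/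
def edgeEmp (q d n : ℕ) (γ : Matchings (d * n)) (σ : Fin n → Fin q) :
    Fin q → Fin q → ℝ :=
  fun τ τ' =>
    ((univ.filter fun i : Fin (d * n) =>
        σ (bar d n i) = τ ∧ σ (bar d n (γ.1 i)) = τ').card : ℝ) / ((n : ℝ) * d)

/-- The vertex empirical (spin) distribution `L^vx(σ)`. -/
def empDist (q n : ℕ) (σ : Fin n → Fin q) : Fin q → ℝ :=
  fun τ => (Nat.card {i : Fin n // σ i = τ} : ℝ) / n

/-- Probability of an event under a weight function. -/
def probOf {α : Type*} (P : α → ℝ) (p : α → Prop) : ℝ := ∑ᶠ (x : α) (_ : p x), P x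

/-- Probability of an event under the uniform measure on simple `d`-regular graphs. -/
def Preg (d n : ℕ) (p : SimpleGraph (Fin n) → Prop) : ℝ :=
  (Nat.card {G : SimpleGraph (Fin n) // (∀ v, mgDeg (sgAdj G) v = d) ∧ p G} : ℝ) /
    (Nat.card {G : SimpleGraph (Fin n) // ∀ v, mgDeg (sgAdj G) v = d} : ℝ)

/-- Adjoin to `G` one new vertex, adjacent to the vertices of `S`. -/
def addVertex (k : ℕ) (G : SimpleGraph (Fin k)) (S : Finset (Fin k)) :
    SimpleGraph (Fin (k + 1)) :=
  SimpleGraph.fromRel fun a b =>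
    (∃ u w : Fin k, a = u.castSucc ∧ b = w.castSucc ∧ G.Adj u w) ∨
      (a = Fin.last k ∧ ∃ w ∈ S, b = w.castSucc)

/-- Strict local maximizer of the edge Bethe functional on the edge simplex. -/
def strictLocalMaxOnEdge (q d : ℕ) (ψ : Fin q → Fin q → ℝ) (ψb : Fin q → ℝ)
    (H : Fin q → Fin q → ℝ) : Prop :=
  ∃ ε : ℝ, 0 < ε ∧ ∀ h' ∈ edgeSimplex q, h' ≠ H → dist h' H < ε →
    edgePhi q d ψ ψb h' < edgePhi q d ψ ψb H

/-- Strictly negative second variation of the edge Bethe functional at `H`, in every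
nonzero symmetric direction of total mass zero. -/
def negSecondVar (q d : ℕ) (ψ : Fin q → Fin q → ℝ) (ψb : Fin q → ℝ)
    (H : Fin q → Fin q → ℝ) : Prop :=
  ∀ δ : Fin q → Fin q → ℝ, δ ≠ 0 → (∀ σ σ', δ σ σ' = δ σ' σ) →
    (∑ σ, ∑ σ', δ σ σ') = 0 →
    iteratedDeriv 2 (fun η : ℝ => edgePhi q d ψ ψb fun σ σ' => H σ σ' + η * δ σ σ') 0 < 0

/-! At a BP fixed point `h` of the Potts model the normalising constant `Z` satisfies
`ψ̄(σ) F(h_σ) = Z` for every spin, because the local field at `σ` is `h_σ / θ + 1`.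
So `F` takes one value `Z` at every `h_σ` with `σ ≠ 1`, and the value `Z / m` at `h_1`
(the paper's spin `1` is `⟨0, _⟩ : Fin q`).
Since `F` decreases on `(0, v]` and increases on `[v, 1]`, it attains its minimum at `v`;
under the hypothesis on `v`, a coordinate `h_σ > v` with `σ ≠ 1` would force
`Z = F(h_σ) ≤ F(1) < m F(v) ≤ m F(h_1) = Z`. Hence all these coordinates lie in `(0, v]`,
where `F` is injective, so they coincide. -/

section BP

variable {q d : ℕ} {ψ : Fin q → Fin q → ℝ} {ψb : Fin q → ℝ} {h : Fin q → ℝ}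

lemma BPmap_pos [Nonempty (Fin q)]
    (hpos : ∀ σ, 0 < ψb σ * (∑ σ', ψ σ σ' * h σ') ^ (d - 1)) (σ : Fin q) :
    0 < BPmap q d ψ ψb h σ :=
  div_pos (hpos σ) (sum_pos (fun τ _ => hpos τ) univ_nonempty)

lemma div_eq_sum_of_BPmap_eq_self (hfix : BPmap q d ψ ψb h = h) {σ : Fin q} (hσ : h σ ≠ 0) :
    ψb σ * (∑ σ', ψ σ σ' * h σ') ^ (d - 1) / h σ =
      ∑ τ, ψb τ * (∑ σ', ψ τ σ' * h σ') ^ (d - 1) := by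
  rw [← congrFun hfix σ] at hσ ⊢
  refine div_div_cancel₀ fun h0 => hσ ?_
  simp only [BPmap, h0, zero_div]

end BP

section Potts

variable {q d : ℕ} {β B : ℝ} {h : Fin q → ℝ}

lemma sum_pottsPsi_mul (hsum : ∑ σ, h σ = 1) (σ : Fin q) :
    ∑ σ', pottsPsi q β σ σ' * h σ' = (Real.exp β - 1) * h σ + 1 := by
  have hψ : ∀ σ', pottsPsi q β σ σ' = 1 + if σ = σ' then Real.exp β - 1 else 0 := by
    intro σ'
    split_ifs with hσ <;> simp [pottsPsi, hσ]
  simp only [hψ, add_mul, one_mul, ite_mul, zero_mul, sum_add_distrib, hsum, sum_ite_eq,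
    mem_univ, if_true]
  ring

lemma pos_of_mem_bpFixedPts_potts (hβ : 0 ≤ β)
    (hh : h ∈ bpFixedPts q d (pottsPsi q β) (pottsPsib q B)) (σ : Fin q) : 0 < h σ := by
  obtain ⟨⟨hnonneg, hsum⟩, hfix⟩ := hh
  have : Nonempty (Fin q) :=
    univ_nonempty_iff.mp (nonempty_of_sum_ne_zero (hsum ▸ one_ne_zero))
  rw [← congrFun hfix σ]
  refine BPmap_pos (fun τ => mul_pos (Real.exp_pos _) (pow_pos ?_ _)) σ
  rw [sum_pottsPsi_mul hsum]
  have hτ := hnonneg τ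
  have hc : 0 ≤ Real.exp β - 1 := by linarith [Real.add_one_le_exp β]
  positivity

lemma exists_pottsPsib_mul_Fpotts_eq (hβ : 0 ≤ β)
    (hh : h ∈ bpFixedPts q d (pottsPsi q β) (pottsPsib q B)) :
    ∃ Z, ∀ σ, pottsPsib q B σ * Fpotts d (1 / (Real.exp β - 1)) (h σ) = Z := by
  refine ⟨∑ τ, pottsPsib q B τ * (∑ σ', pottsPsi q β τ σ' * h σ') ^ (d - 1), fun σ => ?_⟩
  rw [← div_eq_sum_of_BPmap_eq_self hh.2 (pos_of_mem_bpFixedPts_potts hβ hh σ).ne',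
    sum_pottsPsi_mul hh.1.2, Fpotts, one_div, div_inv_eq_mul]
  ring

end Potts

section Fpotts

variable {d : ℕ} {θ : ℝ}

lemma sub_two_pos_of_three_le (hd : 3 ≤ d) : (0 : ℝ) < d - 2 := by
  have : (3 : ℝ) ≤ d := by exact_mod_cast hd
  linarith

lemma hasDerivAt_Fpotts (hd : 2 ≤ d) {x : ℝ} (hx : x ≠ 0) :
    HasDerivAt (Fpotts d θ)
      ((x / θ + 1) ^ (d - 2) * (x ^ 2)⁻¹ * (((d : ℝ) - 2) * x / θ - 1)) x := by
  have hu : HasDerivAt (fun x => x / θ + 1) (1 / θ) x :=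
    ((hasDerivAt_id x).div_const θ).add_const 1
  refine ((hasDerivAt_inv hx).mul (hu.pow (d - 1))).congr_deriv ?_
  obtain ⟨n, rfl⟩ : ∃ n, d = n + 2 := ⟨d - 2, by omega⟩
  simp only [show n + 2 - 1 = n + 1 by omega, Nat.add_sub_cancel, Pi.pow_apply]
  push_cast
  field_simp
  ring

lemma Fpotts_strictAntiOn (hd : 3 ≤ d) (hθ : 0 < θ) :
    StrictAntiOn (Fpotts d θ) (Set.Ioc 0 (θ / ((d : ℝ) - 2))) := by
  have hd2 := sub_two_pos_of_three_le hd
  refine strictAntiOn_of_deriv_neg (convex_Ioc _ _)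
    (fun x hx => (hasDerivAt_Fpotts (by omega) hx.1.ne').continuousAt.continuousWithinAt)
    fun x hx => ?_
  rw [interior_Ioc] at hx
  obtain ⟨hx0, hxv⟩ := hx
  rw [(hasDerivAt_Fpotts (by omega) hx0.ne').deriv]
  have : ((d : ℝ) - 2) * x / θ < 1 := by
    rw [div_lt_one hθ, mul_comm, ← lt_div_iff₀ hd2]
    exact hxv
  exact mul_neg_of_pos_of_neg (by positivity) (by linarith)

lemma Fpotts_strictMonoOn (hd : 3 ≤ d) (hθ : 0 < θ) :
    StrictMonoOn (Fpotts d θ) (Set.Ici (θ / ((d : ℝ) - 2))) := by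
  have hd2 := sub_two_pos_of_three_le hd
  have hv : 0 < θ / ((d : ℝ) - 2) := div_pos hθ hd2
  refine strictMonoOn_of_deriv_pos (convex_Ici _)
    (fun x hx => (hasDerivAt_Fpotts (by omega) (hv.trans_le hx).ne').continuousAt.continuousWithinAt)
    fun x hx => ?_
  rw [interior_Ici] at hx
  have hx0 : 0 < x := hv.trans hx
  rw [(hasDerivAt_Fpotts (by omega) hx0.ne').deriv]
  have : 1 < ((d : ℝ) - 2) * x / θ := by
    rw [one_lt_div hθ, mul_comm, ← div_lt_iff₀ hd2]
    exact hx
  exact mul_pos (by positivity) (by linarith)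

lemma isMinOn_Fpotts (hd : 3 ≤ d) (hθ : 0 < θ) :
    IsMinOn (Fpotts d θ) (Set.Ioi 0) (θ / ((d : ℝ) - 2)) := by
  have hv : 0 < θ / ((d : ℝ) - 2) := div_pos hθ (sub_two_pos_of_three_le hd)
  intro x (hx : 0 < x)
  rcases le_total x (θ / ((d : ℝ) - 2)) with hxv | hvx
  · exact (Fpotts_strictAntiOn hd hθ).antitoneOn ⟨hx, hxv⟩ ⟨hv, le_rfl⟩ hxv
  · exact (Fpotts_strictMonoOn hd hθ).monotoneOn Set.self_mem_Ici hvx hvx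

lemma le_of_Fpotts_eq_mul (hd : 3 ≤ d) (hθ : 0 < θ) {m : ℝ} (hm : 0 ≤ m)
    (hcase : 1 ≤ θ / ((d : ℝ) - 2) ∨
      (θ / ((d : ℝ) - 2) < 1 ∧ Fpotts d θ 1 < m * Fpotts d θ (θ / ((d : ℝ) - 2))))
    {x y : ℝ} (hx : x ≤ 1) (hy : 0 < y) (hxy : Fpotts d θ x = m * Fpotts d θ y) :
    x ≤ θ / ((d : ℝ) - 2) := by
  rcases hcase with hv | ⟨hv, hF⟩
  · exact hx.trans hv
  by_contra! hxv
  have hFx : Fpotts d θ x ≤ Fpotts d θ 1 :=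
    (Fpotts_strictMonoOn hd hθ).monotoneOn hxv.le hv.le hx
  have hFy := mul_le_mul_of_nonneg_left (isMinOn_Fpotts hd hθ (Set.mem_Ioi.mpr hy)) hm
  linarith

end Fpotts

/-- if `v ≥ 1`, or `v < 1` and `m F(v) > F(1)`, then every Potts BP fixed
point takes at most two distinct values: all spins other than one distinguished spin `σ0`
(which is spin `1` when `m > 1`) share a common value at most `v`. -/
theorem potts_fixed_point_two_values
    (q d : ℕ) (hq : 2 ≤ q) (hd : 3 ≤ d) (β B : ℝ) (hβ : 0 < β)
    (hcase : 1 ≤ (1 / (Real.exp β - 1)) / ((d : ℝ) - 2) ∨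
      ((1 / (Real.exp β - 1)) / ((d : ℝ) - 2) < 1 ∧
        Fpotts d (1 / (Real.exp β - 1)) 1 <
          Real.exp B *
            Fpotts d (1 / (Real.exp β - 1))
              ((1 / (Real.exp β - 1)) / ((d : ℝ) - 2)))) :
    ∀ h ∈ bpFixedPts q d (pottsPsi q β) (pottsPsib q B),
      ∃ σ0 : Fin q, (0 < B → σ0 = ⟨0, by omega⟩) ∧
        ∃ p : ℝ, p ≤ (1 / (Real.exp β - 1)) / ((d : ℝ) - 2) ∧
          ∀ σ : Fin q, σ ≠ σ0 → h σ = p := by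
  intro h hh
  have hpos := pos_of_mem_bpFixedPts_potts hβ.le hh
  obtain ⟨Z, hZ⟩ := exists_pottsPsib_mul_Fpotts_eq hβ.le hh
  set θ := 1 / (Real.exp β - 1)
  have hθ : 0 < θ := one_div_pos.mpr (by linarith [Real.add_one_lt_exp hβ.ne'])
  set σ0 : Fin q := ⟨0, by omega⟩
  have hF : ∀ σ ≠ σ0, Fpotts d θ (h σ) = Real.exp B * Fpotts d θ (h σ0) := by
    intro σ hσ
    have hσ0 : σ.1 ≠ 0 := fun h0 => hσ (Fin.ext h0)
    simpa [pottsPsib, hσ0, σ0, ← hZ σ0] using hZ σ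
  have hle : ∀ σ ≠ σ0, h σ ≤ θ / ((d : ℝ) - 2) := fun σ hσ =>
    le_of_Fpotts_eq_mul hd hθ (Real.exp_pos B).le hcase
      (hh.1.2 ▸ single_le_sum (fun τ _ => hh.1.1 τ) (mem_univ σ)) (hpos σ0) (hF σ hσ)
  have hσ1 : (⟨1, by omega⟩ : Fin q) ≠ σ0 := by simp [σ0, Fin.ext_iff]
  refine ⟨σ0, fun _ => rfl, h ⟨1, by omega⟩, hle _ hσ1, fun σ hσ => ?_⟩
  exact (Fpotts_strictAntiOn hd hθ).injOn ⟨hpos σ, hle σ hσ⟩ ⟨hpos _, hle _ hσ1⟩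
    ((hF σ hσ).trans (hF _ hσ1).symm)

end
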